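/- arXiv:1706.09227 — 5 statements merged into one kernel-verified Lean document; each statement's English description precedes it below -/
import Mathlib

section
/- Let f : [a,b] → ℝ be continuous on [a,b] and twice differentiable on (a,b) with |f''(t)| ≤ M for all t ∈ (a,b). Then for every x ∈ [a,b], |f(x) - ((f(b)-f(a))/(b-a))·(x - (a+b)/2) - (1/(b-a))·∫_a^b f(t) dt| ≤ (M/2)·{ [((x-(a+b)/2)²/(b-a)² + 1/4)]² + 1/12 }·(b-a)². -/
/-!
Apply the Montgomery identity
`(b - a) g x - ∫ g = ∫_a^x (t - a) g' t + ∫_x^b (t - b) g' t`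
to `g t = f t - L t`, where `L = (f b - f a) / (b - a)` is the mean value of `f'`.
As `f'` is `M`-Lipschitz, Ostrowski's inequality for `f'` gives
`|f' t - L| ≤ M ((t - a)² + (b - t)²) / (2 (b - a))`, and integrating this bound against the
kernel `|t - a|` on `[a, x]`, `|t - b|` on `[x, b]` yields exactly the right-hand side.
-/

open Set MeasureTheory intervalIntegral

theorem abs_integral_le_of_forall_Ioo {φ ψ : ℝ → ℝ} {c d : ℝ} (hcd : c ≤ d)
    (hψ : IntervalIntegrable ψ volume c d) (h : ∀ t ∈ Ioo c d, |φ t| ≤ ψ t) :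
    |∫ t in c..d, φ t| ≤ ∫ t in c..d, ψ t :=
  (Real.norm_eq_abs _).symm.trans_le <| norm_integral_le_of_norm_le hcd
    ((Measure.ae_ne volume d).mono fun t htd ht => h t ⟨ht.1, lt_of_le_of_ne ht.2 htd⟩) hψ

theorem LipschitzOnWith.intervalIntegrable_of_Ioo {g : ℝ → ℝ} {K : NNReal} {a b : ℝ}
    (hab : a ≤ b) (hg : LipschitzOnWith K g (Ioo a b)) : IntervalIntegrable g volume a b := by
  obtain ⟨G, hG, hgG⟩ := hg.extend_real
  refine (hG.continuous.intervalIntegrable a b).congr_uIoo ?_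
  rw [uIoo_of_le hab]
  exact hgG.symm

theorem integral_abs_sub_of_mem_Icc {a b t : ℝ} (ht : t ∈ Icc a b) :
    ∫ s in a..b, |t - s| = ((t - a) ^ 2 + (b - t) ^ 2) / 2 := by
  have hint : ∀ c d : ℝ, IntervalIntegrable (fun s => |t - s|) volume c d := fun c d =>
    Continuous.intervalIntegrable (by fun_prop) c d
  have hleft : ∫ s in a..t, |t - s| = (t - a) ^ 2 / 2 := by
    rw [integral_congr (g := fun s => t - s) fun s hs =>
      abs_of_nonneg (sub_nonneg.2 (uIcc_of_le ht.1 ▸ hs).2)]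
    simp [integral_comp_sub_left fun s => s]
  have hright : ∫ s in t..b, |t - s| = (b - t) ^ 2 / 2 := by
    rw [integral_congr (g := fun s => s - t) fun s hs => by
      rw [abs_sub_comm]; exact abs_of_nonneg (sub_nonneg.2 (uIcc_of_le ht.2 ▸ hs).1)]
    simp [integral_comp_sub_right fun s => s]
  rw [← integral_add_adjacent_intervals (hint a t) (hint t b), hleft, hright]
  ring

theorem abs_mul_sub_integral_le_of_lipschitz {g : ℝ → ℝ} {a b t K : ℝ} (ht : t ∈ Icc a b)
    (hg : IntervalIntegrable g volume a b) (hlip : ∀ s ∈ Ioo a b, |g t - g s| ≤ K * |t - s|) :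
    |(b - a) * g t - ∫ s in a..b, g s| ≤ K * ((t - a) ^ 2 + (b - t) ^ 2) / 2 := by
  have hab : a ≤ b := ht.1.trans ht.2
  calc |(b - a) * g t - ∫ s in a..b, g s| = |∫ s in a..b, (g t - g s)| := by
        rw [integral_sub intervalIntegrable_const hg, intervalIntegral.integral_const, smul_eq_mul]
    _ ≤ ∫ s in a..b, K * |t - s| :=
        abs_integral_le_of_forall_Ioo hab (Continuous.intervalIntegrable (by fun_prop) _ _) hlip
    _ = K * ((t - a) ^ 2 + (b - t) ^ 2) / 2 := by
        rw [intervalIntegral.integral_const_mul, integral_abs_sub_of_mem_Icc ht, mul_div_assoc]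

theorem integral_sub_mul_deriv {f f' : ℝ → ℝ} {c d : ℝ} (p : ℝ) (hcd : c ≤ d)
    (hf : ContinuousOn f (Icc c d)) (hf' : ∀ t ∈ Ioo c d, HasDerivAt f (f' t) t)
    (hint : IntervalIntegrable f' volume c d) :
    ∫ t in c..d, (t - p) * f' t = (d - p) * f d - (c - p) * f c - ∫ t in c..d, f t := by
  rw [← uIcc_of_le hcd] at hf
  have hderiv : ∀ t ∈ Ioo (min c d) (max c d), HasDerivAt f (f' t) t := by
    rwa [min_eq_left hcd, max_eq_right hcd]
  simpa using integral_mul_deriv_eq_deriv_mul_of_hasDerivAt (u := fun t => t - p) (u' := 1)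
    (by fun_prop) hf (fun t _ => (hasDerivAt_id t).sub_const p) hderiv intervalIntegrable_const hint

theorem montgomery_identity {f f' : ℝ → ℝ} {a b x : ℝ} (hx : x ∈ Icc a b)
    (hf : ContinuousOn f (Icc a b)) (hf' : ∀ t ∈ Ioo a b, HasDerivAt f (f' t) t)
    (hint : IntervalIntegrable f' volume a b) :
    (b - a) * f x - ∫ t in a..b, f t
      = (∫ t in a..x, (t - a) * f' t) + ∫ t in x..b, (t - b) * f' t := by
  obtain ⟨hax, hxb⟩ := hx
  have hx : x ∈ uIcc a b := mem_uIcc_of_le hax hxb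
  have hsub₁ : Icc a x ⊆ Icc a b := Icc_subset_Icc_right hxb
  have hsub₂ : Icc x b ⊆ Icc a b := Icc_subset_Icc_left hax
  rw [integral_sub_mul_deriv a hax (hf.mono hsub₁)
      (fun t ht => hf' t (Ioo_subset_Ioo_right hxb ht))
      (hint.mono_set (uIcc_subset_uIcc left_mem_uIcc hx)),
    integral_sub_mul_deriv b hxb (hf.mono hsub₂)
      (fun t ht => hf' t (Ioo_subset_Ioo_left hax ht))
      (hint.mono_set (uIcc_subset_uIcc hx right_mem_uIcc)),
    ← integral_add_adjacent_intervals ((hf.mono hsub₁).intervalIntegrable_of_Icc hax)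
      ((hf.mono hsub₂).intervalIntegrable_of_Icc hxb)]
  ring

theorem abs_montgomery_kernel_integral_le {h B : ℝ → ℝ} {a b x : ℝ} (hx : x ∈ Icc a b)
    (hB : Continuous B) (hhB : ∀ t ∈ Ioo a b, |h t| ≤ B t) :
    |(∫ t in a..x, (t - a) * h t) + ∫ t in x..b, (t - b) * h t|
      ≤ (∫ t in a..x, (t - a) * B t) + ∫ t in x..b, (b - t) * B t := by
  obtain ⟨hax, hxb⟩ := hx
  refine (abs_add_le _ _).trans (add_le_add ?_ ?_)
  · refine abs_integral_le_of_forall_Ioo hax (Continuous.intervalIntegrable (by fun_prop) _ _)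
      fun t ht => ?_
    rw [abs_mul, abs_of_pos (sub_pos.2 ht.1)]
    exact mul_le_mul_of_nonneg_left (hhB t ⟨ht.1, ht.2.trans_le hxb⟩) (sub_pos.2 ht.1).le
  · refine abs_integral_le_of_forall_Ioo hxb (Continuous.intervalIntegrable (by fun_prop) _ _)
      fun t ht => ?_
    rw [abs_mul, abs_sub_comm, abs_of_pos (sub_pos.2 ht.2)]
    exact mul_le_mul_of_nonneg_left (hhB t ⟨hax.trans_lt ht.1, ht.2⟩) (sub_pos.2 ht.2).le

theorem integral_mul_sq_add_sq (h s : ℝ) :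
    ∫ u in 0..s, u * (u ^ 2 + (h - u) ^ 2)
      = s ^ 4 / 2 - 2 * h * s ^ 3 / 3 + h ^ 2 * s ^ 2 / 2 := by
  have hG : ∀ u, HasDerivAt (fun u => u ^ 4 / 2 - 2 * h * u ^ 3 / 3 + h ^ 2 * u ^ 2 / 2)
      (u * (u ^ 2 + (h - u) ^ 2)) u := fun u => by
    refine (((hasDerivAt_pow 4 u).div_const 2).fun_sub
      (((hasDerivAt_pow 3 u).const_mul (2 * h)).div_const 3)).fun_add
      (((hasDerivAt_pow 2 u).const_mul (h ^ 2)).div_const 2) |>.congr_deriv ?_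
    norm_num
    ring
  rw [integral_eq_sub_of_hasDerivAt (fun u _ => hG u)
    (Continuous.intervalIntegrable (by fun_prop) _ _)]
  ring

theorem integral_montgomery_kernel_mul_sq_add_sq (a b x C : ℝ) :
    (∫ t in a..x, (t - a) * (C * ((t - a) ^ 2 + (b - t) ^ 2)))
        + ∫ t in x..b, (b - t) * (C * ((t - a) ^ 2 + (b - t) ^ 2))
      = C * (((x - (a + b) / 2) ^ 2 + (b - a) ^ 2 / 4) ^ 2 + (b - a) ^ 4 / 12) := by
  set φ : ℝ → ℝ := fun u => u * (u ^ 2 + (b - a - u) ^ 2)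
  have hleft := integral_comp_sub_right φ a (a := a) (b := x)
  have hright := integral_comp_sub_left φ b (a := x) (b := b)
  simp only [φ, sub_self, integral_mul_sq_add_sq, sub_sub_sub_cancel_right,
    sub_sub_sub_cancel_left] at hleft hright
  simp only [mul_left_comm _ C, intervalIntegral.integral_const_mul, ← mul_add]
  rw [hleft, integral_congr (g := fun t => (b - t) * ((b - t) ^ 2 + (t - a) ^ 2))
      fun t _ => by dsimp only; ring, hright]
  ring

theorem abs_deriv_sub_slope_le {f f' : ℝ → ℝ} {a b M : ℝ} (hab : a < b)
    (hf : ContinuousOn f (Icc a b)) (hf' : ∀ t ∈ Ioo a b, HasDerivAt f (f' t) t)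
    (hint : IntervalIntegrable f' volume a b)
    (hlip : ∀ s ∈ Ioo a b, ∀ t ∈ Ioo a b, |f' t - f' s| ≤ M * |t - s|) {t : ℝ}
    (ht : t ∈ Ioo a b) :
    |f' t - (f b - f a) / (b - a)| ≤ M / (2 * (b - a)) * ((t - a) ^ 2 + (b - t) ^ 2) := by
  have hba : 0 < b - a := sub_pos.2 hab
  have h := abs_mul_sub_integral_le_of_lipschitz (Ioo_subset_Icc_self ht) hint
    (fun s hs => hlip s hs t ht)
  rw [integral_eq_sub_of_hasDerivAt_of_le hab.le hf hf' hint,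
    show (b - a) * f' t - (f b - f a) = (b - a) * (f' t - (f b - f a) / (b - a)) by
      rw [mul_sub, mul_div_cancel₀ _ hba.ne'],
    abs_mul, abs_of_pos hba] at h
  rw [div_mul_eq_mul_div, le_div_iff₀ (by positivity)]
  linarith

theorem dragomir_barnett
    (a b : ℝ) (hab : a < b) (f f' f'' : ℝ → ℝ) (M : ℝ)
    (hf : ContinuousOn f (Set.Icc a b))
    (hf' : ∀ t ∈ Set.Ioo a b, HasDerivAt f (f' t) t)
    (hf'' : ∀ t ∈ Set.Ioo a b, HasDerivAt f' (f'' t) t)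
    (hM : ∀ t ∈ Set.Ioo a b, |f'' t| ≤ M) :
    ∀ x ∈ Set.Icc a b,
      |f x - (f b - f a) / (b - a) * (x - (a + b) / 2)
          - (1 / (b - a)) * ∫ t in a..b, f t|
        ≤ M / 2 * (((x - (a + b) / 2) ^ 2 / (b - a) ^ 2 + 1 / 4) ^ 2 + 1 / 12)
            * (b - a) ^ 2 := by
  intro x hx
  have hba : 0 < b - a := sub_pos.2 hab
  set L := (f b - f a) / (b - a)
  have hlip : ∀ s ∈ Ioo a b, ∀ t ∈ Ioo a b, |f' t - f' s| ≤ M * |t - s| :=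
    fun s hs t ht => by
      simpa only [Real.norm_eq_abs] using
        (convex_Ioo a b).norm_image_sub_le_of_norm_hasDerivWithin_le
          (fun u hu => (hf'' u hu).hasDerivWithinAt) hM hs ht
  have hint : IntervalIntegrable f' volume a b :=
    (LipschitzOnWith.of_dist_le' fun t ht s hs => hlip s hs t ht).intervalIntegrable_of_Ioo hab.le
  have hident := montgomery_identity hx (f := fun t => f t - L * t) (f' := fun t => f' t - L)
    (hf.sub (continuousOn_const.mul continuousOn_id))
    (fun t ht => (hf' t ht).sub (((hasDerivAt_id' t).const_mul L).congr_deriv (mul_one L)))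
    (hint.sub intervalIntegrable_const)
  have hbound := abs_montgomery_kernel_integral_le hx (by fun_prop)
    fun _ => abs_deriv_sub_slope_le hab hf hf' hint hlip
  have hshift : (b - a) * (f x - L * x) - ∫ t in a..b, (f t - L * t)
      = (b - a) * (f x - L * (x - (a + b) / 2) - 1 / (b - a) * ∫ t in a..b, f t) := by
    rw [integral_sub (hf.intervalIntegrable_of_Icc hab.le)
        (Continuous.intervalIntegrable (by fun_prop) _ _),
      intervalIntegral.integral_const_mul, integral_id]
    field_simp
    ring
  rw [integral_montgomery_kernel_mul_sq_add_sq, ← hident, hshift, abs_mul, abs_of_pos hba]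
    at hbound
  exact le_of_mul_le_mul_left (hbound.trans_eq (by field_simp)) hba
end

section
/- Let ν : [a,b] → [0,∞) be continuous and positive on (a,b), let w be an antiderivative of ν on [a,b], let f : [a,b] → ℝ be differentiable, let ψ : [0,1] → [0,1], and λ ∈ [0,1]. Define K(s,t) = w(s) - (w(a) + ψ(λ)·(w(b)-w(a))/2) for s ∈ [a,t) and K(s,t) = w(s) - (w(a) + (1+ψ(1-λ))·(w(b)-w(a))/2) for s ∈ [t,b]. Then for every t ∈ [a,b]: [ ((1+ψ(1-λ)-ψ(λ))/2)·f(t) + (ψ(λ)f(a) + (1-ψ(1-λ))f(b))/2 ]·∫_a^b ν(s) ds = ∫_a^b K(s,t)·f'(s) ds + ∫_a^b ν(s)·f(s) ds. -/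
open MeasureTheory intervalIntegral

theorem weighted_montgomery_identity
    (a b : ℝ) (hab : a < b) (ν w f f' : ℝ → ℝ) (ψ : ℝ → ℝ) (lam : ℝ)
    (hν : ContinuousOn ν (Set.Icc a b))
    (hν0 : ∀ t ∈ Set.Icc a b, 0 ≤ ν t)
    (hνpos : ∀ t ∈ Set.Ioo a b, 0 < ν t)
    (hw : ∀ t ∈ Set.Icc a b, HasDerivAt w (ν t) t)
    (hf : ∀ t ∈ Set.Icc a b, HasDerivAt f (f' t) t)
    (hf'int : IntervalIntegrable f' MeasureTheory.volume a b)
    (hψ : ∀ s ∈ Set.Icc (0:ℝ) 1, ψ s ∈ Set.Icc (0:ℝ) 1)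
    (hlam : lam ∈ Set.Icc (0:ℝ) 1)
    (K : ℝ → ℝ → ℝ)
    (hK : ∀ t, ∀ s, K s t =
      if s < t then w s - (w a + ψ lam * (w b - w a) / 2)
      else w s - (w a + (1 + ψ (1 - lam)) * (w b - w a) / 2)) :
    ∀ t ∈ Set.Icc a b,
      ((1 + ψ (1 - lam) - ψ lam) / 2 * f t
          + (ψ lam * f a + (1 - ψ (1 - lam)) * f b) / 2) * ∫ s in a..b, ν s
        = (∫ s in a..b, K s t * f' s) + ∫ s in a..b, ν s * f s := by
  intro t ht
  obtain ⟨hat, htb⟩ := ht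
  have hab' : a ≤ b := hab.le
  set c1 := w a + ψ lam * (w b - w a) / 2 with hc1
  set c2 := w a + (1 + ψ (1 - lam)) * (w b - w a) / 2 with hc2
  have hwc : ContinuousOn w (Set.Icc a b) :=
    fun s hs => (hw s hs).continuousAt.continuousWithinAt
  have hfc : ContinuousOn f (Set.Icc a b) :=
    fun s hs => (hf s hs).continuousAt.continuousWithinAt
  -- integrability helpers
  have hsub : ∀ u v : ℝ, u ∈ Set.Icc a b → v ∈ Set.Icc a b →
      Set.uIcc u v ⊆ Set.Icc a b := by
    intro u v hu hv
    exact Set.uIcc_subset_Icc hu hv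
  have hνfint : ∀ u v : ℝ, u ∈ Set.Icc a b → v ∈ Set.Icc a b →
      IntervalIntegrable (fun s => ν s * f s) volume u v := by
    intro u v hu hv
    exact ((hν.mono (hsub u v hu hv)).mul (hfc.mono (hsub u v hu hv))).intervalIntegrable
  have hwf'int : ∀ (c : ℝ) (u v : ℝ), u ∈ Set.Icc a b → v ∈ Set.Icc a b →
      IntervalIntegrable (fun s => (w s - c) * f' s) volume u v := by
    intro c u v hu hv
    have h1 : IntervalIntegrable f' volume u v := by
      apply hf'int.mono_set
      rw [Set.uIcc_of_le hab']
      exact hsub u v hu hv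
    exact h1.continuousOn_mul ((hwc.mono (hsub u v hu hv)).sub continuousOn_const)
  -- integration by parts
  have parts : ∀ (c : ℝ) (u v : ℝ), u ∈ Set.Icc a b → v ∈ Set.Icc a b →
      ∫ s in u..v, (w s - c) * f' s
        = (w v - c) * f v - (w u - c) * f u - ∫ s in u..v, ν s * f s := by
    intro c u v hu hv
    have hsum : ∫ s in u..v, (ν s * f s + (w s - c) * f' s)
        = (w v - c) * f v - (w u - c) * f u := by
      apply intervalIntegral.integral_eq_sub_of_hasDerivAt
      · intro s hs
        have hs' : s ∈ Set.Icc a b := hsub u v hu hv hs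
        exact ((hw s hs').sub_const c).mul (hf s hs')
      · exact (hνfint u v hu hv).add (hwf'int c u v hu hv)
    rw [intervalIntegral.integral_add (hνfint u v hu hv) (hwf'int c u v hu hv)] at hsum
    linarith
  have hta : t ∈ Set.Icc a b := ⟨hat, htb⟩
  have haa : a ∈ Set.Icc a b := ⟨le_refl a, hab'⟩
  have hbb : b ∈ Set.Icc a b := ⟨hab', le_refl b⟩
  -- ae fact
  have haet : ∀ᵐ s : ℝ ∂volume, s ≠ t := by
    rw [MeasureTheory.ae_iff]
    simp
  -- K on [a,t] a.e. equals w - c1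
  have hK1ae : (fun s => K s t * f' s)
      =ᵐ[volume.restrict (Set.uIoc a t)] (fun s => (w s - c1) * f' s) := by
    filter_upwards [MeasureTheory.ae_restrict_mem measurableSet_uIoc,
      MeasureTheory.ae_restrict_of_ae haet] with s hs hst
    rw [Set.uIoc_of_le hat] at hs
    rw [hK, if_pos (lt_of_le_of_ne hs.2 hst)]
  -- K on [t,b] equals w - c2
  have hK2 : Set.EqOn (fun s => K s t * f' s) (fun s => (w s - c2) * f' s)
      (Set.uIcc t b) := by
    intro s hs
    rw [Set.uIcc_of_le htb] at hs
    simp only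
    rw [hK, if_neg (not_lt.mpr hs.1)]
  have hKint1 : IntervalIntegrable (fun s => K s t * f' s) volume a t := by
    rw [intervalIntegrable_iff]
    exact ((intervalIntegrable_iff.mp (hwf'int c1 a t haa hta)).congr hK1ae.symm)
  have hKint2 : IntervalIntegrable (fun s => K s t * f' s) volume t b := by
    rw [intervalIntegrable_iff]
    refine (intervalIntegrable_iff.mp (hwf'int c2 t b hta hbb)).congr ?_
    filter_upwards [MeasureTheory.ae_restrict_mem measurableSet_uIoc] with s hs
    rw [Set.uIoc_of_le htb] at hs
    show (w s - c2) * f' s = K s t * f' s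
    rw [hK, if_neg (not_lt.mpr hs.1.le)]
  have hKeq1 : ∫ s in a..t, K s t * f' s = ∫ s in a..t, (w s - c1) * f' s :=
    intervalIntegral.integral_congr_ae (by
      filter_upwards [haet] with s hst _
      rw [Set.uIoc_of_le hat] at *
      rename_i hs
      rw [hK, if_pos (lt_of_le_of_ne hs.2 hst)])
  have hKeq2 : ∫ s in t..b, K s t * f' s = ∫ s in t..b, (w s - c2) * f' s :=
    intervalIntegral.integral_congr hK2
  have hKsplit : ∫ s in a..b, K s t * f' s
      = (∫ s in a..t, K s t * f' s) + ∫ s in t..b, K s t * f' s :=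
    (intervalIntegral.integral_add_adjacent_intervals hKint1 hKint2).symm
  have hνfsplit : ∫ s in a..b, ν s * f s
      = (∫ s in a..t, ν s * f s) + ∫ s in t..b, ν s * f s :=
    (intervalIntegral.integral_add_adjacent_intervals
      (hνfint a t haa hta) (hνfint t b hta hbb)).symm
  have hνtot : ∫ s in a..b, ν s = w b - w a := by
    apply intervalIntegral.integral_eq_sub_of_hasDerivAt
    · intro s hs
      rw [Set.uIcc_of_le hab'] at hs
      exact hw s hs
    · exact hν.intervalIntegrable_of_Icc hab'
  rw [hKsplit, hKeq1, hKeq2, parts c1 a t haa hta, parts c2 t b hta hbb,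
    hνfsplit, hνtot, hc1, hc2]
  ring
end

section
/- Let w, f : [a,b] → ℝ be differentiable with w' = ν ≥ 0, let ψ : [0,1] → [0,1], λ ∈ [0,1]. Define K(t,x) = w(t) - (w(a)+ψ(λ)(w(b)-w(a))/2) for t ∈ [a,x) and K(t,x) = w(t) - (w(a)+(1+ψ(1-λ))(w(b)-w(a))/2) for t ∈ [x,b]. Then for all x ∈ [a,b]: | [((1+ψ(1-λ)-ψ(λ))/(2(b-a)))·f(x) + (ψ(λ)f(a)+(1-ψ(1-λ))f(b))/(2(b-a))]·∫_a^b w'(t) dt − (1/(b-a))·∫_a^b w'(t)f(t) dt − ((f(b)-f(a))/(b-a)²)·∫_a^b K(t,x) dt | ≤ [ (1/(b-a))·∫_a^b K(t,x)² dt − ((1/(b-a))·∫_a^b K(t,x) dt)² ]^{1/2} · [ (1/(b-a))·∫_a^b f'(t)² dt − ((1/(b-a))·∫_a^b f'(t) dt)² ]^{1/2}. -/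
/-!
Integrating by parts separately on `[a, x]` and `[x, b]` shows that the expression inside the
absolute value is the Chebyshev functional `T(g, h) = ⨍ g h - ⨍ g ⨍ h` of `g = K(·, x)` and
`h = f'`, where `⨍` is the mean over `[a, b]`. The bound is then the Grüss inequality
`|T(g, h)| ≤ √T(g, g) √T(h, h)`, i.e. the Cauchy–Schwarz inequality for the centred functions
`g - ⨍ g` and `h - ⨍ h`.
-/

open MeasureTheory Set intervalIntegral

section Piecewise

variable {E : Type*} [NormedAddCommGroup E] {μ : Measure ℝ} [NullSingletonClass μ]
  {a b x : ℝ} {u v : ℝ → E}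

theorem IntervalIntegrable.ite_lt (hax : a ≤ x) (hxb : x ≤ b)
    (hu : IntervalIntegrable u μ a x) (hv : IntervalIntegrable v μ x b) :
    IntervalIntegrable (fun t => if t < x then u t else v t) μ a b :=
  (hu.congr_uIoo fun _ ht => (if_pos (uIoo_of_le hax ▸ ht).2).symm).trans
    (hv.congr_uIoo fun _ ht => (if_neg (not_lt.2 (uIoo_of_le hxb ▸ ht).1.le)).symm)

theorem intervalIntegral.integral_ite_lt [NormedSpace ℝ E] (hax : a ≤ x) (hxb : x ≤ b)
    (hu : IntervalIntegrable u μ a x) (hv : IntervalIntegrable v μ x b) :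
    ∫ t in a..b, (if t < x then u t else v t) ∂μ
      = (∫ t in a..x, u t ∂μ) + ∫ t in x..b, v t ∂μ := by
  have hx : x ∈ uIcc a b := uIcc_of_le (hax.trans hxb) ▸ ⟨hax, hxb⟩
  have hite := hu.ite_lt hax hxb hv
  rw [← integral_add_adjacent_intervals (hite.mono_set (uIcc_subset_uIcc_left hx))
    (hite.mono_set (uIcc_subset_uIcc_right hx))]
  congr 1
  · exact integral_congr_Ioo_of_le hax fun t ht => if_pos ht.2
  · exact integral_congr_Ioo_of_le hxb fun t ht => if_neg (not_lt.2 ht.1.le)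

theorem ContinuousOn.intervalIntegrable_ite_lt [IsLocallyFiniteMeasure μ] (hx : x ∈ Icc a b)
    (hu : ContinuousOn u (Icc a b)) (hv : ContinuousOn v (Icc a b)) :
    IntervalIntegrable (fun t => if t < x then u t else v t) μ a b :=
  .ite_lt hx.1 hx.2 ((hu.mono (Icc_subset_Icc_right hx.2)).intervalIntegrable_of_Icc hx.1)
    ((hv.mono (Icc_subset_Icc_left hx.1)).intervalIntegrable_of_Icc hx.2)

end Piecewise

theorem intervalIntegral.integral_ite_lt_sub_const_mul_deriv {a b x : ℝ} {w ν f f' : ℝ → ℝ}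
    (hx : x ∈ Icc a b)
    (hw : ∀ t ∈ Icc a b, HasDerivAt w (ν t) t) (hf : ∀ t ∈ Icc a b, HasDerivAt f (f' t) t)
    (hν : IntervalIntegrable ν volume a b) (hf' : IntervalIntegrable f' volume a b)
    (c₁ c₂ : ℝ) :
    ∫ t in a..b, (if t < x then w t - c₁ else w t - c₂) * f' t
      = (c₂ - c₁) * f x + (c₁ - w a) * f a + (w b - c₂) * f b - ∫ t in a..b, ν t * f t := by
  have hI : uIcc a b = Icc a b := uIcc_of_le (hx.1.trans hx.2)
  have hx' : x ∈ uIcc a b := hI ▸ hx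
  have hwc : ContinuousOn w (uIcc a b) := HasDerivAt.continuousOn fun t ht => hw t (hI ▸ ht)
  have hfc : ContinuousOn f (uIcc a b) := HasDerivAt.continuousOn fun t ht => hf t (hI ▸ ht)
  have by_parts : ∀ {p q : ℝ} (c : ℝ), uIcc p q ⊆ uIcc a b →
      ∫ t in p..q, (w t - c) * f' t
        = (w q - c) * f q - (w p - c) * f p - ∫ t in p..q, ν t * f t :=
    fun c h => integral_mul_deriv_eq_deriv_mul (fun t ht => (hw t (hI ▸ h ht)).sub_const c)
      (fun t ht => hf t (hI ▸ h ht)) (hν.mono_set h) (hf'.mono_set h)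
  have piece : ∀ {p q : ℝ} (c : ℝ), uIcc p q ⊆ uIcc a b →
      IntervalIntegrable (fun t => (w t - c) * f' t) volume p q :=
    fun c h => (hf'.mono_set h).continuousOn_mul ((hwc.sub continuousOn_const).mono h)
  have h₁ := uIcc_subset_uIcc_left hx'
  have h₂ := uIcc_subset_uIcc_right hx'
  simp only [ite_mul]
  rw [integral_ite_lt hx.1 hx.2 (piece c₁ h₁) (piece c₂ h₂), by_parts c₁ h₁, by_parts c₂ h₂,
    ← integral_add_adjacent_intervals ((hν.mul_continuousOn hfc).mono_set h₁)
      ((hν.mul_continuousOn hfc).mono_set h₂)]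
  ring

noncomputable def chebyshevFunctional (a b : ℝ) (g h : ℝ → ℝ) : ℝ :=
  (1 / (b - a)) * (∫ t in a..b, g t * h t)
    - ((1 / (b - a)) * ∫ t in a..b, g t) * ((1 / (b - a)) * ∫ t in a..b, h t)

section Gruss

variable {a b : ℝ} {g h : ℝ → ℝ}

theorem intervalIntegral.sq_integral_mul_le_mul_integral_mul_self (hab : a ≤ b)
    (hgg : IntervalIntegrable (fun t => g t * g t) volume a b)
    (hhh : IntervalIntegrable (fun t => h t * h t) volume a b)
    (hgh : IntervalIntegrable (fun t => g t * h t) volume a b) :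
    (∫ t in a..b, g t * h t) ^ 2 ≤ (∫ t in a..b, g t * g t) * ∫ t in a..b, h t * h t := by
  have quadratic_nonneg : ∀ r : ℝ, 0 ≤ (∫ t in a..b, g t * g t) * (r * r)
      + 2 * (∫ t in a..b, g t * h t) * r + ∫ t in a..b, h t * h t := by
    intro r
    have expand : (fun t => (r * g t + h t) * (r * g t + h t))
        = fun t => (r * r) * (g t * g t) + (2 * r) * (g t * h t) + h t * h t := by
      funext t; ring
    have := integral_nonneg (μ := volume) hab fun t _ => mul_self_nonneg (r * g t + h t)
    rw [expand, integral_add ((hgg.const_mul _).add (hgh.const_mul _)) hhh,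
      integral_add (hgg.const_mul _) (hgh.const_mul _), integral_const_mul,
      integral_const_mul] at this
    linarith
  have := discrim_le_zero quadratic_nonneg
  rw [discrim] at this
  linarith

theorem IntervalIntegrable.sub_const_mul_sub_const (hg : IntervalIntegrable g volume a b)
    (hh : IntervalIntegrable h volume a b)
    (hgh : IntervalIntegrable (fun t => g t * h t) volume a b) (c d : ℝ) :
    IntervalIntegrable (fun t => (g t - c) * (h t - d)) volume a b :=
  (((hgh.sub (hg.const_mul d)).sub (hh.const_mul c)).add
    (intervalIntegrable_const (c := c * d))).congr fun t _ => by ring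

theorem intervalIntegral.integral_sub_const_mul_sub_const (hg : IntervalIntegrable g volume a b)
    (hh : IntervalIntegrable h volume a b)
    (hgh : IntervalIntegrable (fun t => g t * h t) volume a b) (c d : ℝ) :
    ∫ t in a..b, (g t - c) * (h t - d)
      = (∫ t in a..b, g t * h t) - d * (∫ t in a..b, g t) - c * (∫ t in a..b, h t)
        + (b - a) * (c * d) := by
  have expand : (fun t => (g t - c) * (h t - d))
      = fun t => g t * h t - d * g t - c * h t + c * d := by
    funext t; ring
  rw [expand,
    integral_add ((hgh.sub (hg.const_mul d)).sub (hh.const_mul c)) intervalIntegrable_const,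
    integral_sub (hgh.sub (hg.const_mul d)) (hh.const_mul c), integral_sub hgh (hg.const_mul d),
    integral_const_mul, integral_const_mul, intervalIntegral.integral_const, smul_eq_mul]

theorem chebyshevFunctional_eq_average_centered (hab : a ≠ b)
    (hg : IntervalIntegrable g volume a b) (hh : IntervalIntegrable h volume a b)
    (hgh : IntervalIntegrable (fun t => g t * h t) volume a b) :
    chebyshevFunctional a b g h = (1 / (b - a)) * ∫ t in a..b,
      (g t - (1 / (b - a)) * ∫ s in a..b, g s) * (h t - (1 / (b - a)) * ∫ s in a..b, h s) := by
  have : b - a ≠ 0 := sub_ne_zero.2 hab.symm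
  rw [integral_sub_const_mul_sub_const hg hh hgh, chebyshevFunctional]
  field_simp
  ring

theorem chebyshevFunctional_self_nonneg (hab : a < b) (hg : IntervalIntegrable g volume a b)
    (hgg : IntervalIntegrable (fun t => g t * g t) volume a b) :
    0 ≤ chebyshevFunctional a b g g := by
  rw [chebyshevFunctional_eq_average_centered hab.ne hg hg hgg]
  exact mul_nonneg (by simpa using hab.le) (integral_nonneg hab.le fun t _ => mul_self_nonneg _)

theorem abs_chebyshevFunctional_le (hab : a < b)
    (hg : IntervalIntegrable g volume a b) (hh : IntervalIntegrable h volume a b)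
    (hgg : IntervalIntegrable (fun t => g t * g t) volume a b)
    (hhh : IntervalIntegrable (fun t => h t * h t) volume a b)
    (hgh : IntervalIntegrable (fun t => g t * h t) volume a b) :
    |chebyshevFunctional a b g h|
      ≤ √(chebyshevFunctional a b g g) * √(chebyshevFunctional a b h h) := by
  rw [← Real.sqrt_mul (chebyshevFunctional_self_nonneg hab hg hgg)]
  apply Real.abs_le_sqrt
  rw [chebyshevFunctional_eq_average_centered hab.ne hg hh hgh,
    chebyshevFunctional_eq_average_centered hab.ne hg hg hgg,
    chebyshevFunctional_eq_average_centered hab.ne hh hh hhh]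
  set gbar := (1 / (b - a)) * ∫ s in a..b, g s
  set hbar := (1 / (b - a)) * ∫ s in a..b, h s
  have cauchy_schwarz := sq_integral_mul_le_mul_integral_mul_self hab.le
    (hg.sub_const_mul_sub_const hg hgg gbar gbar) (hh.sub_const_mul_sub_const hh hhh hbar hbar)
    (hg.sub_const_mul_sub_const hh hgh gbar hbar)
  rw [mul_pow, mul_mul_mul_comm, ← sq]
  exact mul_le_mul_of_nonneg_left cauchy_schwarz (sq_nonneg _)

end Gruss

theorem weighted_ostrowski_gruss_real_general
    (a b : ℝ) (hab : a < b) (w ν f f' : ℝ → ℝ) (ψ : ℝ → ℝ) (lam : ℝ)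
    (hw : ∀ t ∈ Set.Icc a b, HasDerivAt w (ν t) t)
    (hνc : ContinuousOn ν (Set.Icc a b))
    (hf : ∀ t ∈ Set.Icc a b, HasDerivAt f (f' t) t)
    (hf'c : ContinuousOn f' (Set.Icc a b))
    (K : ℝ → ℝ → ℝ)
    (hK : ∀ x, ∀ t, K t x =
      if t < x then w t - (w a + ψ lam * (w b - w a) / 2)
      else w t - (w a + (1 + ψ (1 - lam)) * (w b - w a) / 2)) :
    ∀ x ∈ Set.Icc a b,
      |((1 + ψ (1 - lam) - ψ lam) / (2 * (b - a)) * f x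
            + (ψ lam * f a + (1 - ψ (1 - lam)) * f b) / (2 * (b - a)))
            * (∫ t in a..b, ν t)
          - (1 / (b - a)) * (∫ t in a..b, ν t * f t)
          - (f b - f a) / (b - a) ^ 2 * ∫ t in a..b, K t x|
        ≤ Real.sqrt ((1 / (b - a)) * (∫ t in a..b, (K t x) ^ 2)
              - ((1 / (b - a)) * ∫ t in a..b, K t x) ^ 2)
          * Real.sqrt ((1 / (b - a)) * (∫ t in a..b, (f' t) ^ 2)
              - ((1 / (b - a)) * ∫ t in a..b, f' t) ^ 2) := by
  intro x hx
  have hI : uIcc a b = Icc a b := uIcc_of_le hab.le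
  have hwc : ∀ c, ContinuousOn (fun t => w t - c) (Icc a b) :=
    fun _ => (HasDerivAt.continuousOn hw).sub continuousOn_const
  have hνi : IntervalIntegrable ν volume a b := hνc.intervalIntegrable_of_Icc hab.le
  have hf'i : IntervalIntegrable f' volume a b := hf'c.intervalIntegrable_of_Icc hab.le
  have hk : IntervalIntegrable (fun t => K t x) volume a b := by
    simp only [hK x]
    exact (hwc _).intervalIntegrable_ite_lt hx (hwc _)
  have hkk : IntervalIntegrable (fun t => K t x * K t x) volume a b := by
    simp only [← sq, hK x, ite_pow]
    exact ((hwc _).pow 2).intervalIntegrable_ite_lt hx ((hwc _).pow 2)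
  have hkf' : IntervalIntegrable (fun t => K t x * f' t) volume a b := by
    simp only [hK x, ite_mul]
    exact ((hwc _).mul hf'c).intervalIntegrable_ite_lt hx ((hwc _).mul hf'c)
  convert abs_chebyshevFunctional_le hab hk hf'i hkk
    ((hf'c.mul hf'c).intervalIntegrable_of_Icc hab.le) hkf' using 2
  · have hν := integral_eq_sub_of_hasDerivAt (fun t ht => hw t (hI ▸ ht)) hνi
    have hf' := integral_eq_sub_of_hasDerivAt (fun t ht => hf t (hI ▸ ht)) hf'i
    simp only [chebyshevFunctional, hK x, hν, hf',
      integral_ite_lt_sub_const_mul_deriv hx hw hf hνi hf'i]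
    have : b - a ≠ 0 := sub_ne_zero.2 hab.ne'
    field_simp
    ring
  all_goals simp only [chebyshevFunctional, sq]

theorem weighted_ostrowski_gruss_real
    (a b : ℝ) (hab : a < b) (w ν f f' : ℝ → ℝ) (ψ : ℝ → ℝ) (lam : ℝ)
    (hw : ∀ t ∈ Set.Icc a b, HasDerivAt w (ν t) t)
    (hνc : ContinuousOn ν (Set.Icc a b))
    (hν0 : ∀ t ∈ Set.Icc a b, 0 ≤ ν t)
    (hf : ∀ t ∈ Set.Icc a b, HasDerivAt f (f' t) t)
    (hf'c : ContinuousOn f' (Set.Icc a b))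
    (hψ : ∀ s ∈ Set.Icc (0:ℝ) 1, ψ s ∈ Set.Icc (0:ℝ) 1)
    (hlam : lam ∈ Set.Icc (0:ℝ) 1)
    (K : ℝ → ℝ → ℝ)
    (hK : ∀ x, ∀ t, K t x =
      if t < x then w t - (w a + ψ lam * (w b - w a) / 2)
      else w t - (w a + (1 + ψ (1 - lam)) * (w b - w a) / 2)) :
    ∀ x ∈ Set.Icc a b,
      |((1 + ψ (1 - lam) - ψ lam) / (2 * (b - a)) * f x
            + (ψ lam * f a + (1 - ψ (1 - lam)) * f b) / (2 * (b - a)))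
            * (∫ t in a..b, ν t)
          - (1 / (b - a)) * (∫ t in a..b, ν t * f t)
          - (f b - f a) / (b - a) ^ 2 * ∫ t in a..b, K t x|
        ≤ Real.sqrt ((1 / (b - a)) * (∫ t in a..b, (K t x) ^ 2)
              - ((1 / (b - a)) * ∫ t in a..b, K t x) ^ 2)
          * Real.sqrt ((1 / (b - a)) * (∫ t in a..b, (f' t) ^ 2)
              - ((1 / (b - a)) * ∫ t in a..b, f' t) ^ 2) :=
  weighted_ostrowski_gruss_real_general a b hab w ν f f' ψ lam hw hνc hf hf'c K hK
end

section
/- Let a < b be integers, w, f : {a,…,b} → ℝ, ψ : [0,1] → [0,1], λ ∈ [0,1], x ∈ {a,…,b}. Define Δξ(t) = ξ(t+1) − ξ(t) and K(t,x) = w(t) − (w(a)+ψ(λ)(w(b)−w(a))/2) for a ≤ t < x, K(t,x) = w(t) − (w(a)+(1+ψ(1−λ))(w(b)−w(a))/2) for x ≤ t ≤ b. Then | [((1+ψ(1−λ)−ψ(λ))/(2(b−a)))·f(x) + (ψ(λ)f(a)+(1−ψ(1−λ))f(b))/(2(b−a))]·Σ_{t=a}^{b−1} Δw(t) − (1/(b−a))·Σ_{t=a}^{b−1}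 Δw(t)·f(t+1) − ((f(b)−f(a))/(b−a)²)·Σ_{t=a}^{b−1} K(t,x) | ≤ [ (1/(b−a))·Σ_{t=a}^{b−1} K(t,x)² − ((1/(b−a))·Σ_{t=a}^{b−1} K(t,x))² ]^{1/2} · [ (1/(b−a))·Σ_{t=a}^{b−1} (Δf(t))² − ((1/(b−a))·Σ_{t=a}^{b−1} Δf(t))² ]^{1/2}. -/
/-!
Summation by parts, together with telescoping on the two pieces `[a, x)` and `[x, b)` where the
kernel `K(·, x)` is `w` minus a constant, turns the left-hand side into the discrete covariance
`(1/n) ∑ K Δf - (1/n ∑ K) (1/n ∑ Δf)` over the `n = b - a` points of `[a, b)`. The bound is then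
the discrete Grüss inequality: the covariance of two centred sequences is controlled by the
Cauchy–Schwarz inequality.
-/

open Finset

section Summation

variable {R : Type*} [CommRing R]

theorem Int.sum_Ico_sub {M : Type*} [AddCommGroup M] (g : ℤ → M) {a b : ℤ} (hab : a ≤ b) :
    ∑ t ∈ Ico a b, (g (t + 1) - g t) = g b - g a := by
  induction b, hab using Int.leInduction with
  | base => simp
  | succ b hab ih =>
    rw [← insert_Ico_right_eq_Ico_add_one hab, sum_insert right_notMem_Ico, ih]
    abel

theorem Int.sum_Ico_mul_sub (w f : ℤ → R) {a b : ℤ} (hab : a ≤ b) :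
    ∑ t ∈ Ico a b, w t * (f (t + 1) - f t) =
      w b * f b - w a * f a - ∑ t ∈ Ico a b, (w (t + 1) - w t) * f (t + 1) := by
  rw [eq_sub_iff_add_eq, ← sum_add_distrib, ← Int.sum_Ico_sub (fun t ↦ w t * f t) hab]
  exact sum_congr rfl fun t _ ↦ by ring

theorem Int.sum_Ico_sub_const_mul_sub (w f : ℤ → R) (c : R) {a b : ℤ} (hab : a ≤ b) :
    ∑ t ∈ Ico a b, (w t - c) * (f (t + 1) - f t) =
      ∑ t ∈ Ico a b, w t * (f (t + 1) - f t) - c * (f b - f a) := by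
  rw [← Int.sum_Ico_sub f hab, mul_sum, ← sum_sub_distrib]
  exact sum_congr rfl fun t _ ↦ by ring

theorem Int.sum_Ico_ite_mul_sub (w f k : ℤ → R) (c₁ c₂ : R) {a x b : ℤ} (hax : a ≤ x)
    (hxb : x ≤ b) (hk : ∀ t, k t = if t < x then w t - c₁ else w t - c₂) :
    ∑ t ∈ Ico a b, k t * (f (t + 1) - f t) =
      w b * f b - w a * f a - ∑ t ∈ Ico a b, (w (t + 1) - w t) * f (t + 1)
        - c₁ * (f x - f a) - c₂ * (f b - f x) := by
  have left : ∑ t ∈ Ico a x, k t * (f (t + 1) - f t) =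
      ∑ t ∈ Ico a x, (w t - c₁) * (f (t + 1) - f t) :=
    sum_congr rfl fun t ht ↦ by rw [hk, if_pos (mem_Ico.1 ht).2]
  have right : ∑ t ∈ Ico x b, k t * (f (t + 1) - f t) =
      ∑ t ∈ Ico x b, (w t - c₂) * (f (t + 1) - f t) :=
    sum_congr rfl fun t ht ↦ by rw [hk, if_neg (mem_Ico.1 ht).1.not_gt]
  have split (g : ℤ → R) : ∑ t ∈ Ico a b, g t = ∑ t ∈ Ico a x, g t + ∑ t ∈ Ico x b, g t := by
    rw [← sum_union (Ico_disjoint_Ico_consecutive a x b), Ico_union_Ico_eq_Ico hax hxb]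
  rw [split, left, right, Int.sum_Ico_sub_const_mul_sub w f c₁ hax,
    Int.sum_Ico_sub_const_mul_sub w f c₂ hxb, ← Int.sum_Ico_mul_sub w f (hax.trans hxb), split]
  ring

end Summation

section Covariance

variable {ι : Type*} (s : Finset ι)

theorem Finset.mean_mul_sub_mean_mul_mean {𝕜 : Type*} [Field 𝕜] [CharZero 𝕜] (u v : ι → 𝕜) :
    1 / #s * ∑ i ∈ s, u i * v i - (1 / #s * ∑ i ∈ s, u i) * (1 / #s * ∑ i ∈ s, v i) =
      1 / #s * ∑ i ∈ s, (u i - 1 / #s * ∑ j ∈ s, u j) * (v i - 1 / #s * ∑ j ∈ s, v j) := by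
  rcases s.eq_empty_or_nonempty with rfl | hs
  · simp
  have hcard : (#s : 𝕜) ≠ 0 := by exact_mod_cast hs.card_pos.ne'
  simp only [sub_mul, mul_sub, sum_sub_distrib, ← sum_mul, ← mul_sum, sum_const, nsmul_eq_mul]
  field_simp
  ring

theorem Finset.abs_mean_mul_sub_mean_mul_mean_le (u v : ι → ℝ) :
    |1 / #s * ∑ i ∈ s, u i * v i - (1 / #s * ∑ i ∈ s, u i) * (1 / #s * ∑ i ∈ s, v i)| ≤
      √(1 / #s * ∑ i ∈ s, u i ^ 2 - (1 / #s * ∑ i ∈ s, u i) ^ 2) *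
        √(1 / #s * ∑ i ∈ s, v i ^ 2 - (1 / #s * ∑ i ∈ s, v i) ^ 2) := by
  have variance (g : ι → ℝ) : 1 / #s * ∑ i ∈ s, g i ^ 2 - (1 / #s * ∑ i ∈ s, g i) ^ 2 =
      1 / #s * ∑ i ∈ s, (g i - 1 / #s * ∑ j ∈ s, g j) ^ 2 := by
    simpa only [sq] using s.mean_mul_sub_mean_mul_mean g g
  have hn : (0 : ℝ) ≤ 1 / #s := by positivity
  set ubar := 1 / #s * ∑ j ∈ s, u j
  set vbar := 1 / #s * ∑ j ∈ s, v j
  have cauchy_schwarz : |∑ i ∈ s, (u i - ubar) * (v i - vbar)| ≤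
      √(∑ i ∈ s, (u i - ubar) ^ 2) * √(∑ i ∈ s, (v i - vbar) ^ 2) :=
    (Real.abs_le_sqrt (sum_mul_sq_le_sq_mul_sq s _ _)).trans_eq
      (Real.sqrt_mul (sum_nonneg fun _ _ ↦ sq_nonneg _) _)
  rw [s.mean_mul_sub_mean_mul_mean, variance, variance, abs_mul, abs_of_nonneg hn,
    Real.sqrt_mul hn, Real.sqrt_mul hn, mul_mul_mul_comm, Real.mul_self_sqrt hn]
  gcongr

end Covariance

theorem ostrowski_identity (w f k : ℤ → ℝ) (p q : ℝ) {a x b : ℤ} (hab : a < b) (hax : a ≤ x)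
    (hxb : x ≤ b) (hk : ∀ t, k t = if t < x then w t - (w a + p * (w b - w a) / 2)
      else w t - (w a + (1 + q) * (w b - w a) / 2)) :
    ((1 + q - p) / (2 * ((b : ℝ) - a)) * f x + (p * f a + (1 - q) * f b) / (2 * ((b : ℝ) - a)))
          * (∑ t ∈ Ico a b, (w (t + 1) - w t))
        - (1 / ((b : ℝ) - a)) * ∑ t ∈ Ico a b, (w (t + 1) - w t) * f (t + 1)
        - (f b - f a) / ((b : ℝ) - a) ^ 2 * ∑ t ∈ Ico a b, k t =
      1 / ((b : ℝ) - a) * ∑ t ∈ Ico a b, k t * (f (t + 1) - f t)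
        - (1 / ((b : ℝ) - a) * ∑ t ∈ Ico a b, k t)
          * (1 / ((b : ℝ) - a) * ∑ t ∈ Ico a b, (f (t + 1) - f t)) := by
  have hn : (b : ℝ) - a ≠ 0 := sub_ne_zero.2 (by exact_mod_cast hab.ne')
  rw [Int.sum_Ico_ite_mul_sub w f k _ _ hax hxb hk, Int.sum_Ico_sub w hab.le,
    Int.sum_Ico_sub f hab.le]
  field_simp
  ring

theorem discrete_ostrowski_gruss_general
    (a b : ℤ) (hab : a < b) (w f : ℤ → ℝ) (ψ : ℝ → ℝ) (lam : ℝ)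
    (K : ℤ → ℤ → ℝ)
    (hK : ∀ x, ∀ t, K t x =
      if t < x then w t - (w a + ψ lam * (w b - w a) / 2)
      else w t - (w a + (1 + ψ (1 - lam)) * (w b - w a) / 2)) :
    ∀ x ∈ Set.Icc a b,
      |((1 + ψ (1 - lam) - ψ lam) / (2 * ((b : ℝ) - a)) * f x
            + (ψ lam * f a + (1 - ψ (1 - lam)) * f b) / (2 * ((b : ℝ) - a)))
            * (∑ t ∈ Finset.Ico a b, (w (t + 1) - w t))
          - (1 / ((b : ℝ) - a)) * ∑ t ∈ Finset.Ico a b, (w (t + 1) - w t) * f (t + 1)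
          - (f b - f a) / ((b : ℝ) - a) ^ 2 * ∑ t ∈ Finset.Ico a b, K t x|
        ≤ Real.sqrt ((1 / ((b : ℝ) - a)) * (∑ t ∈ Finset.Ico a b, (K t x) ^ 2)
              - ((1 / ((b : ℝ) - a)) * ∑ t ∈ Finset.Ico a b, K t x) ^ 2)
          * Real.sqrt ((1 / ((b : ℝ) - a)) * (∑ t ∈ Finset.Ico a b, (f (t + 1) - f t) ^ 2)
              - ((1 / ((b : ℝ) - a)) * ∑ t ∈ Finset.Ico a b, (f (t + 1) - f t)) ^ 2) := by
  rintro x ⟨hax, hxb⟩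
  have hcard : (#(Ico a b) : ℝ) = b - a := by exact_mod_cast Int.card_Ico_of_le a b hab.le
  rw [ostrowski_identity w f (K · x) _ _ hab hax hxb (hK x), ← hcard]
  exact (Ico a b).abs_mean_mul_sub_mean_mul_mean_le (K · x) (fun t ↦ f (t + 1) - f t)

theorem discrete_ostrowski_gruss
    (a b : ℤ) (hab : a < b) (w f : ℤ → ℝ) (ψ : ℝ → ℝ) (lam : ℝ)
    (hψ : ∀ s ∈ Set.Icc (0:ℝ) 1, ψ s ∈ Set.Icc (0:ℝ) 1)
    (hlam : lam ∈ Set.Icc (0:ℝ) 1)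
    (K : ℤ → ℤ → ℝ)
    (hK : ∀ x, ∀ t, K t x =
      if t < x then w t - (w a + ψ lam * (w b - w a) / 2)
      else w t - (w a + (1 + ψ (1 - lam)) * (w b - w a) / 2)) :
    ∀ x ∈ Set.Icc a b,
      |((1 + ψ (1 - lam) - ψ lam) / (2 * ((b : ℝ) - a)) * f x
            + (ψ lam * f a + (1 - ψ (1 - lam)) * f b) / (2 * ((b : ℝ) - a)))
            * (∑ t ∈ Finset.Ico a b, (w (t + 1) - w t))
          - (1 / ((b : ℝ) - a)) * ∑ t ∈ Finset.Ico a b, (w (t + 1) - w t) * f (t + 1)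
          - (f b - f a) / ((b : ℝ) - a) ^ 2 * ∑ t ∈ Finset.Ico a b, K t x|
        ≤ Real.sqrt ((1 / ((b : ℝ) - a)) * (∑ t ∈ Finset.Ico a b, (K t x) ^ 2)
              - ((1 / ((b : ℝ) - a)) * ∑ t ∈ Finset.Ico a b, K t x) ^ 2)
          * Real.sqrt ((1 / ((b : ℝ) - a)) * (∑ t ∈ Finset.Ico a b, (f (t + 1) - f t) ^ 2)
              - ((1 / ((b : ℝ) - a)) * ∑ t ∈ Finset.Ico a b, (f (t + 1) - f t)) ^ 2) :=
  discrete_ostrowski_gruss_general a b hab w f ψ lam K hK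
end

section
/- Let ν : [a,b] → [0,∞) be continuous and positive, w an antiderivative of ν, f : [a,b] → ℝ continuously differentiable with |f'(t)| ≤ M on (a,b), ψ : [0,1] → [0,1], λ ∈ [0,1]. With K(s,t) = w(s) − (w(a)+ψ(λ)(w(b)−w(a))/2) for s ∈ [a,t) and K(s,t) = w(s) − (w(a)+(1+ψ(1−λ))(w(b)−w(a))/2) for s ∈ [t,b], the following holds for all t ∈ [a,b]: | [ ((1+ψ(1−λ)−ψ(λ))/2)·f(t) + (ψ(λ)f(a)+(1−ψ(1−λ))f(b))/2 ]·∫_a^b ν(s) ds − ∫_a^b ν(s)f(s) ds | ≤ M·∫_a^b |K(s,t)| ds. -/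
open MeasureTheory intervalIntegral Set

theorem nwaeze_weighted_ostrowski_real
    (a b : ℝ) (hab : a < b) (ν w f f' : ℝ → ℝ) (ψ : ℝ → ℝ) (lam M : ℝ)
    (hν : ContinuousOn ν (Set.Icc a b))
    (hνpos : ∀ t ∈ Set.Icc a b, 0 < ν t)
    (hw : ∀ t ∈ Set.Icc a b, HasDerivAt w (ν t) t)
    (hf : ∀ t ∈ Set.Icc a b, HasDerivAt f (f' t) t)
    (hf'c : ContinuousOn f' (Set.Icc a b))
    (hM : ∀ t ∈ Set.Ioo a b, |f' t| ≤ M)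
    (hψ : ∀ s ∈ Set.Icc (0:ℝ) 1, ψ s ∈ Set.Icc (0:ℝ) 1)
    (hlam : lam ∈ Set.Icc (0:ℝ) 1)
    (K : ℝ → ℝ → ℝ)
    (hK : ∀ t, ∀ s, K s t =
      if s < t then w s - (w a + ψ lam * (w b - w a) / 2)
      else w s - (w a + (1 + ψ (1 - lam)) * (w b - w a) / 2)) :
    ∀ t ∈ Set.Icc a b,
      |((1 + ψ (1 - lam) - ψ lam) / 2 * f t
            + (ψ lam * f a + (1 - ψ (1 - lam)) * f b) / 2) * (∫ s in a..b, ν s)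
          - ∫ s in a..b, ν s * f s|
        ≤ M * ∫ s in a..b, |K s t| := by
  intro t ht
  obtain ⟨hat, htb⟩ := ht
  have hab' : a ≤ b := hab.le
  set c1 : ℝ := w a + ψ lam * (w b - w a) / 2 with hc1
  set c2 : ℝ := w a + (1 + ψ (1 - lam)) * (w b - w a) / 2 with hc2
  set g1 : ℝ → ℝ := fun s => w s - c1 with hg1
  set g2 : ℝ → ℝ := fun s => w s - c2 with hg2
  have hwc : ContinuousOn w (Set.Icc a b) := fun x hx => (hw x hx).continuousAt.continuousWithinAt
  have hfc : ContinuousOn f (Set.Icc a b) := fun x hx => (hf x hx).continuousAt.continuousWithinAt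
  have hsub1 : Set.uIcc a t ⊆ Set.Icc a b := by
    rw [Set.uIcc_of_le hat]; exact Set.Icc_subset_Icc le_rfl htb
  have hsub2 : Set.uIcc t b ⊆ Set.Icc a b := by
    rw [Set.uIcc_of_le htb]; exact Set.Icc_subset_Icc hat le_rfl
  have hsub : Set.uIcc a b ⊆ Set.Icc a b := by rw [Set.uIcc_of_le hab']
  -- interval integrabilities
  have hνi1 : IntervalIntegrable ν volume a t := (hν.mono hsub1).intervalIntegrable
  have hνi2 : IntervalIntegrable ν volume t b := (hν.mono hsub2).intervalIntegrable
  have hfi1 : IntervalIntegrable f' volume a t := (hf'c.mono hsub1).intervalIntegrable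
  have hfi2 : IntervalIntegrable f' volume t b := (hf'c.mono hsub2).intervalIntegrable
  -- FTC
  have Iν : (∫ s in a..b, ν s) = w b - w a := by
    exact integral_eq_sub_of_hasDerivAt (fun x hx => hw x (hsub hx))
      ((hν.mono hsub).intervalIntegrable)
  -- integration by parts on [a,t]
  have parts1 : (∫ s in a..t, g1 s * f' s)
      = g1 t * f t - g1 a * f a - ∫ s in a..t, ν s * f s := by
    exact integral_mul_deriv_eq_deriv_mul
      (fun x hx => ((hw x (hsub1 hx)).sub_const c1))
      (fun x hx => hf x (hsub1 hx)) hνi1 hfi1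
  have parts2 : (∫ s in t..b, g2 s * f' s)
      = g2 b * f b - g2 t * f t - ∫ s in t..b, ν s * f s := by
    exact integral_mul_deriv_eq_deriv_mul
      (fun x hx => ((hw x (hsub2 hx)).sub_const c2))
      (fun x hx => hf x (hsub2 hx)) hνi2 hfi2
  have hνf : (∫ s in a..b, ν s * f s) = (∫ s in a..t, ν s * f s) + ∫ s in t..b, ν s * f s := by
    exact (integral_add_adjacent_intervals
      (((hν.mono hsub1).mul (hfc.mono hsub1)).intervalIntegrable)
      (((hν.mono hsub2).mul (hfc.mono hsub2)).intervalIntegrable)).symm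
  -- the main identity
  have key : ((1 + ψ (1 - lam) - ψ lam) / 2 * f t
            + (ψ lam * f a + (1 - ψ (1 - lam)) * f b) / 2) * (∫ s in a..b, ν s)
          - (∫ s in a..b, ν s * f s)
      = (∫ s in a..t, g1 s * f' s) + ∫ s in t..b, g2 s * f' s := by
    rw [parts1, parts2, Iν, hνf]; simp only [hg1, hg2, hc1, hc2]; ring
  rw [key]
  -- a.e. facts
  have htne : ∀ᵐ x : ℝ, x ≠ t := by
    refine ae_iff.mpr ?_
    have : {x : ℝ | ¬ x ≠ t} = {t} := by ext x; simp
    rw [this]; exact measure_singleton t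
  have hMnn : 0 ≤ M := le_trans (abs_nonneg _)
    (hM ((a+b)/2) ⟨by linarith, by linarith⟩)
  -- |K s t| integrable and equal a.e. to |g1| on [a,t], |g2| on [t,b]
  have hg1c : ContinuousOn (fun s => |g1 s|) (Set.uIcc a t) :=
    ((hwc.mono hsub1).sub continuousOn_const).abs
  have hg2c : ContinuousOn (fun s => |g2 s|) (Set.uIcc t b) :=
    ((hwc.mono hsub2).sub continuousOn_const).abs
  have hKae1 : (fun s => |K s t|) =ᵐ[volume.restrict (Set.Ioc a t)] (fun s => |g1 s|) := by
    filter_upwards [ae_restrict_of_ae htne, ae_restrict_mem measurableSet_Ioc] with x hx hx'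
    have : x < t := lt_of_le_of_ne hx'.2 hx
    rw [hK t x, if_pos this]
  have hKae2 : (fun s => |K s t|) =ᵐ[volume.restrict (Set.Ioc t b)] (fun s => |g2 s|) := by
    filter_upwards [ae_restrict_mem measurableSet_Ioc] with x hx'
    rw [hK t x, if_neg (not_lt.mpr hx'.1.le)]
  have hKi1 : IntervalIntegrable (fun s => |K s t|) volume a t := by
    rw [intervalIntegrable_iff, Set.uIoc_of_le hat]
    exact (hg1c.intervalIntegrable.1.congr hKae1.symm)
  have hKi2 : IntervalIntegrable (fun s => |K s t|) volume t b := by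
    rw [intervalIntegrable_iff, Set.uIoc_of_le htb]
    exact (hg2c.intervalIntegrable.1.congr hKae2.symm)
  have hKsplit : (∫ s in a..b, |K s t|) = (∫ s in a..t, |K s t|) + ∫ s in t..b, |K s t| :=
    (integral_add_adjacent_intervals hKi1 hKi2).symm
  have hK1 : (∫ s in a..t, |K s t|) = ∫ s in a..t, |g1 s| := by
    refine integral_congr_ae ?_
    filter_upwards [htne] with x hx hx'
    rw [Set.uIoc_of_le hat] at hx'
    have : x < t := lt_of_le_of_ne hx'.2 hx
    rw [hK t x, if_pos this]
  have hK2 : (∫ s in t..b, |K s t|) = ∫ s in t..b, |g2 s| := by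
    refine integral_congr_ae (Filter.Eventually.of_forall ?_)
    intro x hx'
    rw [Set.uIoc_of_le htb] at hx'
    rw [hK t x, if_neg (not_lt.mpr hx'.1.le)]
  -- endpoint bound lemma
  have hbound : ∀ (c d : ℝ) (g : ℝ → ℝ), a ≤ c → c ≤ d → d ≤ b →
      ContinuousOn g (Set.uIcc c d) →
      |∫ s in c..d, g s * f' s| ≤ M * ∫ s in c..d, |g s| := by
    intro c d g hac hcd hdb hgc
    have hsub' : Set.uIcc c d ⊆ Set.Icc a b := by
      rw [Set.uIcc_of_le hcd]; exact Set.Icc_subset_Icc hac hdb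
    calc |∫ s in c..d, g s * f' s| ≤ ∫ s in c..d, |g s * f' s| :=
          abs_integral_le_integral_abs hcd
      _ ≤ ∫ s in c..d, M * |g s| := by
          refine integral_mono_ae_restrict hcd
            ((hgc.mul (hf'c.mono hsub')).abs.intervalIntegrable)
            ((continuousOn_const.mul hgc.abs).intervalIntegrable) ?_
          filter_upwards [ae_restrict_of_ae htne, ae_restrict_mem measurableSet_Icc,
            ae_restrict_of_ae (show ∀ᵐ x : ℝ, x ≠ a ∧ x ≠ b by
              refine Filter.Eventually.and ?_ ?_ <;>
              · refine ae_iff.mpr ?_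
                first
                | (have h' : {x : ℝ | ¬ x ≠ a} = {a} := by ext x; simp
                   rw [h']; exact measure_singleton a)
                | (have h' : {x : ℝ | ¬ x ≠ b} = {b} := by ext x; simp
                   rw [h']; exact measure_singleton b))] with x hx hx' hx''
          have hxa : a < x := lt_of_le_of_ne (hac.trans hx'.1) (Ne.symm hx''.1)
          have hxb : x < b := lt_of_le_of_ne (hx'.2.trans hdb) hx''.2
          rw [abs_mul]
          calc |g x| * |f' x| ≤ |g x| * M :=
                mul_le_mul_of_nonneg_left (hM x ⟨hxa, hxb⟩) (abs_nonneg _)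
            _ = M * |g x| := mul_comm _ _
      _ = M * ∫ s in c..d, |g s| := integral_const_mul M _
  calc |(∫ s in a..t, g1 s * f' s) + ∫ s in t..b, g2 s * f' s|
      ≤ |∫ s in a..t, g1 s * f' s| + |∫ s in t..b, g2 s * f' s| := abs_add_le _ _
    _ ≤ M * (∫ s in a..t, |g1 s|) + M * ∫ s in t..b, |g2 s| := by
        gcongr
        · exact hbound a t g1 le_rfl hat htb ((hwc.mono hsub1).sub continuousOn_const)
        · exact hbound t b g2 hat htb le_rfl ((hwc.mono hsub2).sub continuousOn_const)
    _ = M * ∫ s in a..b, |K s t| := by rw [hKsplit, hK1, hK2]; ring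
end
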